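/- (Soundness of Bernstein sign pruning.) Let n ∈ ℕ, L : Fin n → ℕ, let a assign a real coefficient a_K to every multi-index K ≤ L, let p(x) = ∑_{K ≤ L} a_K · ∏_i (x i)^(K i), let d, d̄ : Fin n → ℝ satisfy d i < d̄ i for all i, and let b_K be the Bernstein coefficients of p over the box [d, d̄] given by b_K = ∑_{J ≤ K} (∏_i ((K i).choose (J i) : ℝ) / ((L i).choose (J i))) · (∏_i (d̄ i − d i)^(J i)) · ∑_{J ≤ I ≤ L} (∏_i ((I i).choose (J i) : ℝ)) · (∏_i (d i)^(I i − J i)) · a_I. If min_{K ≤ L} b_K > 0 then p(x) > 0 for every x in the box (in particular there is no x in the box with p(x) ≤ 0); and if max_{K ≤ L} b_K < 0 then p(x) < 0 for every x in the box. -/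

import Mathlib

/-!
Substituting `x = d + (d̄ - d) t` and expanding every monomial `t ^ J` in the Bernstein basis of
multidegree `L`, via the one-variable identity `t ^ j = ∑ₖ (C(k, j) / C(N, j)) B_{k,N}(t)`, writes
`p(x)` as `∑_K b_K Ber_{K,L}(t)`. For `x` in the box, `t` lies in the unit cube, where the Bernstein
basis polynomials are nonnegative and sum to one; so `p(x)` is a convex combination of the `b_K`
and lies between their minimum and maximum.
-/

/-- The finite set of multi-indices `K ≤ L`. -/
def multiIdx {n : ℕ} (L : Fin n → ℕ) : Finset (Fin n → ℕ) :=
  Fintype.piFinset fun i => Finset.range (L i + 1)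

lemma multiIdx_nonempty {n : ℕ} (L : Fin n → ℕ) : (multiIdx L).Nonempty :=
  ⟨fun _ => 0, by simp [multiIdx, Fintype.mem_piFinset]⟩

/-- The Bernstein coefficients `b_K` of the polynomial with power-basis coefficients `a`
over the box `[d, d̄]`. -/
noncomputable def bernCoeff {n : ℕ} (L : Fin n → ℕ) (a : (Fin n → ℕ) → ℝ)
    (d dbar : Fin n → ℝ) (K : Fin n → ℕ) : ℝ :=
  ∑ J ∈ multiIdx K,
    (∏ i, ((K i).choose (J i) : ℝ) / ((L i).choose (J i))) *
    (∏ i, (dbar i - d i) ^ (J i)) *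
    ∑ I ∈ Fintype.piFinset (fun i => Finset.Icc (J i) (L i)),
      (∏ i, ((I i).choose (J i) : ℝ)) * (∏ i, (d i) ^ (I i - J i)) * a I

open Finset

noncomputable def bernsteinBasis {n : ℕ} (L : Fin n → ℕ) (t : Fin n → ℝ) (K : Fin n → ℕ) : ℝ :=
  ∏ i, ((L i).choose (K i) : ℝ) * t i ^ (K i) * (1 - t i) ^ (L i - K i)

lemma sum_range_choose_mul_pow_mul_one_sub_pow (N : ℕ) (t : ℝ) :
    ∑ k ∈ range (N + 1), (N.choose k : ℝ) * t ^ k * (1 - t) ^ (N - k) = 1 := by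
  have h := (add_pow t (1 - t) N).symm
  rw [add_sub_cancel, one_pow] at h
  exact (sum_congr rfl fun k _ => by ring).trans h

lemma sum_range_choose_div_choose_mul_bernstein {N j : ℕ} (hj : j ≤ N) (t : ℝ) :
    ∑ k ∈ range (N + 1),
      ((k.choose j : ℝ) / N.choose j) * ((N.choose k : ℝ) * t ^ k * (1 - t) ^ (N - k)) = t ^ j := by
  have hNj : (N.choose j : ℝ) ≠ 0 := by exact_mod_cast (Nat.choose_pos hj).ne'
  rw [show N + 1 = j + (N - j + 1) by omega, sum_range_add]
  have below : ∀ k ∈ range j,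
      ((k.choose j : ℝ) / N.choose j) * ((N.choose k : ℝ) * t ^ k * (1 - t) ^ (N - k)) = 0 :=
    fun k hk => by rw [Nat.choose_eq_zero_of_lt (mem_range.1 hk)]; simp
  have above : ∀ m ∈ range (N - j + 1),
      (((j + m).choose j : ℝ) / N.choose j) *
          ((N.choose (j + m) : ℝ) * t ^ (j + m) * (1 - t) ^ (N - (j + m))) =
        t ^ j * (((N - j).choose m : ℝ) * t ^ m * (1 - t) ^ (N - j - m)) := by
    intro m _
    have hchoose : (N.choose (j + m) : ℝ) * ((j + m).choose j : ℝ) =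
        (N.choose j : ℝ) * ((N - j).choose m : ℝ) := by
      exact_mod_cast (Nat.add_sub_cancel_left (n := j) (m := m)) ▸
        Nat.choose_mul (n := N) (Nat.le_add_right j m)
    rw [pow_add, Nat.sub_add_eq N j m, div_mul_eq_mul_div, div_eq_iff hNj]
    linear_combination (t ^ j * t ^ m * (1 - t) ^ (N - j - m)) * hchoose
  rw [sum_eq_zero below, sum_congr rfl above, ← mul_sum,
    sum_range_choose_mul_pow_mul_one_sub_pow, zero_add, mul_one]

lemma prod_add_pow_eq_sum_multiIdx {R : Type*} [CommSemiring R] {n : ℕ} (u v : Fin n → R)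
    (I : Fin n → ℕ) :
    ∏ i, (u i + v i) ^ I i =
      ∑ J ∈ multiIdx I, ∏ i, u i ^ J i * v i ^ (I i - J i) * ((I i).choose (J i) : R) := by
  simp_rw [add_pow]
  rw [multiIdx, prod_univ_sum]

section

variable {n : ℕ} (L : Fin n → ℕ)

lemma mem_multiIdx {K : Fin n → ℕ} : K ∈ multiIdx L ↔ ∀ i, K i ≤ L i := by
  simp [multiIdx, Fintype.mem_piFinset]

lemma bernsteinBasis_nonneg {t : Fin n → ℝ} (ht : ∀ i, 0 ≤ t i ∧ t i ≤ 1) (K : Fin n → ℕ) :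
    0 ≤ bernsteinBasis L t K :=
  prod_nonneg fun i _ =>
    mul_nonneg (mul_nonneg (Nat.cast_nonneg _) (pow_nonneg (ht i).1 _))
      (pow_nonneg (sub_nonneg.2 (ht i).2) _)

lemma sum_bernsteinBasis (t : Fin n → ℝ) : ∑ K ∈ multiIdx L, bernsteinBasis L t K = 1 := by
  have h := prod_univ_sum (fun i => range (L i + 1))
    fun i k => ((L i).choose k : ℝ) * t i ^ k * (1 - t i) ^ (L i - k)
  rw [prod_eq_one fun i _ => sum_range_choose_mul_pow_mul_one_sub_pow (L i) (t i)] at h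
  exact h.symm

lemma prod_pow_eq_sum_bernsteinBasis {J : Fin n → ℕ} (hJ : J ∈ multiIdx L) (t : Fin n → ℝ) :
    ∏ i, t i ^ J i =
      ∑ K ∈ multiIdx L,
        (∏ i, ((K i).choose (J i) : ℝ) / (L i).choose (J i)) * bernsteinBasis L t K := by
  calc ∏ i, t i ^ J i
      = ∏ i, ∑ k ∈ range (L i + 1), ((k.choose (J i) : ℝ) / (L i).choose (J i)) *
          ((L i).choose k * t i ^ k * (1 - t i) ^ (L i - k)) :=
        prod_congr rfl fun i _ =>
          (sum_range_choose_div_choose_mul_bernstein ((mem_multiIdx L).1 hJ i) (t i)).symm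
    _ = _ := by
        rw [prod_univ_sum]
        simp_rw [bernsteinBasis, ← prod_mul_distrib]
        rfl

lemma sum_multiIdx_sum_multiIdx_comm {M : Type*} [AddCommMonoid M]
    (f : (Fin n → ℕ) → (Fin n → ℕ) → M) :
    ∑ I ∈ multiIdx L, ∑ J ∈ multiIdx I, f I J =
      ∑ J ∈ multiIdx L, ∑ I ∈ Fintype.piFinset (fun i => Icc (J i) (L i)), f I J :=
  sum_comm' fun I J => by
    simp only [mem_multiIdx, Fintype.mem_piFinset, mem_Icc]
    constructor
    · rintro ⟨hIL, hJI⟩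
      exact ⟨fun i => ⟨hJI i, hIL i⟩, fun i => (hJI i).trans (hIL i)⟩
    · rintro ⟨hJIL, -⟩
      exact ⟨fun i => (hJIL i).2, fun i => (hJIL i).1⟩

lemma sum_mul_prod_affine_pow (a : (Fin n → ℕ) → ℝ) (c d t : Fin n → ℝ) :
    ∑ I ∈ multiIdx L, a I * ∏ i, (c i * t i + d i) ^ I i =
      ∑ J ∈ multiIdx L, (∏ i, c i ^ J i) * (∏ i, t i ^ J i) *
        ∑ I ∈ Fintype.piFinset (fun i => Icc (J i) (L i)),
          (∏ i, ((I i).choose (J i) : ℝ)) * (∏ i, d i ^ (I i - J i)) * a I := by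
  simp_rw [prod_add_pow_eq_sum_multiIdx, mul_sum]
  rw [sum_multiIdx_sum_multiIdx_comm]
  refine sum_congr rfl fun J _ => sum_congr rfl fun I _ => ?_
  simp only [mul_pow, prod_mul_distrib]
  ring

lemma bernCoeff_eq_sum_multiIdx (a : (Fin n → ℕ) → ℝ) (d dbar : Fin n → ℝ) {K : Fin n → ℕ}
    (hK : K ∈ multiIdx L) :
    bernCoeff L a d dbar K =
      ∑ J ∈ multiIdx L,
        (∏ i, ((K i).choose (J i) : ℝ) / (L i).choose (J i)) * (∏ i, (dbar i - d i) ^ J i) *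
        ∑ I ∈ Fintype.piFinset (fun i => Icc (J i) (L i)),
          (∏ i, ((I i).choose (J i) : ℝ)) * (∏ i, d i ^ (I i - J i)) * a I := by
  refine sum_subset (fun J hJ => ?_) (fun J _ hJ => ?_)
  · rw [mem_multiIdx] at hJ hK ⊢
    exact fun i => (hJ i).trans (hK i)
  · obtain ⟨i, hi⟩ : ∃ i, K i < J i := by simpa [mem_multiIdx] using hJ
    rw [prod_eq_zero (mem_univ i) (by simp [Nat.choose_eq_zero_of_lt hi]), zero_mul, zero_mul]

theorem sum_mul_prod_pow_eq_sum_bernsteinBasis_mul_bernCoeff (a : (Fin n → ℕ) → ℝ)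
    (d dbar t : Fin n → ℝ) :
    ∑ K ∈ multiIdx L, a K * ∏ i, ((dbar i - d i) * t i + d i) ^ K i =
      ∑ K ∈ multiIdx L, bernsteinBasis L t K * bernCoeff L a d dbar K := by
  rw [sum_mul_prod_affine_pow]
  calc _ = ∑ J ∈ multiIdx L, ∑ K ∈ multiIdx L, bernsteinBasis L t K *
        ((∏ i, ((K i).choose (J i) : ℝ) / (L i).choose (J i)) * (∏ i, (dbar i - d i) ^ J i) *
          ∑ I ∈ Fintype.piFinset (fun i => Icc (J i) (L i)),
            (∏ i, ((I i).choose (J i) : ℝ)) * (∏ i, d i ^ (I i - J i)) * a I) := by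
        refine sum_congr rfl fun J hJ => ?_
        rw [prod_pow_eq_sum_bernsteinBasis L hJ t, mul_sum (multiIdx L), sum_mul]
        exact sum_congr rfl fun K _ => by ring
    _ = _ := by
        rw [sum_comm]
        exact sum_congr rfl fun K hK => by rw [bernCoeff_eq_sum_multiIdx L a d dbar hK, mul_sum]

end

lemma exists_unitCube_of_mem_box {n : ℕ} {d dbar x : Fin n → ℝ}
    (hx : ∀ i, d i ≤ x i ∧ x i ≤ dbar i) :
    ∃ t : Fin n → ℝ, (∀ i, 0 ≤ t i ∧ t i ≤ 1) ∧ x = fun i => (dbar i - d i) * t i + d i := by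
  refine ⟨fun i => (x i - d i) / (dbar i - d i), fun i => ?_, funext fun i => ?_⟩
  · obtain ⟨hdx, hxd⟩ := hx i
    exact ⟨div_nonneg (by linarith) (by linarith), div_le_one_of_le₀ (by linarith) (by linarith)⟩
  · obtain ⟨hdx, hxd⟩ := hx i
    rcases (sub_nonneg.2 (hdx.trans hxd)).eq_or_lt with hdeg | hpos
    -- a degenerate side `d i = dbar i` forces `x i = d i`; there `t i = 0` since `/ 0 = 0`
    · rw [← hdeg, zero_mul, zero_add]
      linarith
    · field_simp
      ring

theorem bernstein_sign_pruning_sound_general (n : ℕ) (L : Fin n → ℕ)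
    (a : (Fin n → ℕ) → ℝ) (d dbar : Fin n → ℝ) :
    (0 < (multiIdx L).inf' (multiIdx_nonempty L) (bernCoeff L a d dbar) →
      ∀ x : Fin n → ℝ, (∀ i, d i ≤ x i ∧ x i ≤ dbar i) →
        0 < ∑ K ∈ multiIdx L, a K * ∏ i, (x i) ^ (K i)) ∧
    ((multiIdx L).sup' (multiIdx_nonempty L) (bernCoeff L a d dbar) < 0 →
      ∀ x : Fin n → ℝ, (∀ i, d i ≤ x i ∧ x i ≤ dbar i) →
        ∑ K ∈ multiIdx L, a K * ∏ i, (x i) ^ (K i) < 0) := by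
  have expansion : ∀ x : Fin n → ℝ, (∀ i, d i ≤ x i ∧ x i ≤ dbar i) →
      ∃ t : Fin n → ℝ, (∀ K ∈ multiIdx L, 0 ≤ bernsteinBasis L t K) ∧
        ∑ K ∈ multiIdx L, a K * ∏ i, x i ^ K i =
          (multiIdx L).centerMass (bernsteinBasis L t) (bernCoeff L a d dbar) := by
    intro x hx
    obtain ⟨t, ht, rfl⟩ := exists_unitCube_of_mem_box hx
    refine ⟨t, fun K _ => bernsteinBasis_nonneg L ht K, ?_⟩
    rw [centerMass_eq_of_sum_1 _ _ (sum_bernsteinBasis L t)]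
    exact sum_mul_prod_pow_eq_sum_bernsteinBasis_mul_bernCoeff L a d dbar t
  have total_pos (t : Fin n → ℝ) : 0 < ∑ K ∈ multiIdx L, bernsteinBasis L t K :=
    (sum_bernsteinBasis L t).symm ▸ one_pos
  refine ⟨fun hmin x hx => ?_, fun hmax x hx => ?_⟩
  · obtain ⟨t, ht, hp⟩ := expansion x hx
    exact hp ▸ hmin.trans_le (inf_le_centerMass ht (total_pos t))
  · obtain ⟨t, ht, hp⟩ := expansion x hx
    exact hp ▸ (centerMass_le_sup ht (total_pos t)).trans_lt hmax

/-- Soundness of Bernstein sign pruning: if the minimum Bernstein coefficient is positive,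
the polynomial is positive everywhere on the box; if the maximum Bernstein coefficient is
negative, the polynomial is negative everywhere on the box. -/
theorem bernstein_sign_pruning_sound (n : ℕ) (L : Fin n → ℕ)
    (a : (Fin n → ℕ) → ℝ) (d dbar : Fin n → ℝ) (hd : ∀ i, d i < dbar i) :
    (0 < (multiIdx L).inf' (multiIdx_nonempty L) (bernCoeff L a d dbar) →
      ∀ x : Fin n → ℝ, (∀ i, d i ≤ x i ∧ x i ≤ dbar i) →
        0 < ∑ K ∈ multiIdx L, a K * ∏ i, (x i) ^ (K i)) ∧
    ((multiIdx L).sup' (multiIdx_nonempty L) (bernCoeff L a d dbar) < 0 →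
      ∀ x : Fin n → ℝ, (∀ i, d i ≤ x i ∧ x i ≤ dbar i) →
        ∑ K ∈ multiIdx L, a K * ∏ i, (x i) ^ (K i) < 0) :=
  bernstein_sign_pruning_sound_general n L a d dbar
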